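/- The k-subspace Δ_n · Λ_n = {Δ_n f : f ∈ Λ_n} of Λ_n (equivalently, the ideal of Λ_n generated by the discriminant Δ_n) is equal to the k-linear span of the elements Σ_{σ ∈ S_n} sgn(σ) · m_{χ(σ)}, where χ ranges over ℤ^n and χ(σ) ∈ ℤ^n is defined by χ(σ)_i = χ_i + σ(i) for 1 ≤ i ≤ n. -/

import Mathlib

/-!
`Δ_n·Λ_n` equals the `k`-span of the singular vectors `Σ_σ sgn(σ) m_{χ(σ)}`,
where `χ(σ)_i = χ_i + σ(i)` (1-indexed: `χ_i + (σ i : ℕ) + 1`).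
-/

set_option linter.unusedSectionVars false
set_option maxHeartbeats 1000000

noncomputable section

variable (k : Type) [Field k] [CharZero k] (n : ℕ)

/-- The Laurent polynomial ring in `n` variables over `k`. -/
abbrev Rn : Type := AddMonoidAlgebra k (Fin n → ℤ)

/-- The monomial `z^γ = z_1^{γ_1} ⋯ z_n^{γ_n}`. -/
def Z (γ : Fin n → ℤ) : Rn k n := AddMonoidAlgebra.single γ 1

/-- Permutation of the exponents, as an additive equivalence of `ℤ^n`. -/
def permAddEquiv (σ : Equiv.Perm (Fin n)) : (Fin n → ℤ) ≃+ (Fin n → ℤ) where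
  toFun γ := γ ∘ σ
  invFun γ := γ ∘ σ.symm
  left_inv γ := by funext i; simp
  right_inv γ := by funext i; simp
  map_add' _ _ := rfl

/-- The action of a permutation `σ ∈ S_n` on `R_n` as a `k`-algebra automorphism,
permuting the variables (`z^γ ↦ z^{γ ∘ σ}`). -/
def permAlg (σ : Equiv.Perm (Fin n)) : Rn k n ≃ₐ[k] Rn k n :=
  AddMonoidAlgebra.domCongr k k (permAddEquiv n σ)

/-- `Λ_n`, the subalgebra of symmetric Laurent polynomials. -/
def SymLaurent : Subalgebra k (Rn k n) where
  carrier := {f | ∀ σ : Equiv.Perm (Fin n), permAlg k n σ f = f}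
  mul_mem' := fun {a b} ha hb σ => by rw [map_mul, ha σ, hb σ]
  add_mem' := fun {a b} ha hb σ => by rw [map_add, ha σ, hb σ]
  one_mem' := fun σ => map_one _
  zero_mem' := fun σ => map_zero _
  algebraMap_mem' := fun r σ => (permAlg k n σ).commutes r


/-- The symmetrized monomial `m_γ = (1/n!) Σ_{σ ∈ S_n} ∏_i z_{σ(i)}^{γ_i}`. -/
def msym (γ : Fin n → ℤ) : Rn k n :=
  ((n.factorial : k)⁻¹) • ∑ σ : Equiv.Perm (Fin n), Z k n (γ ∘ σ)

/-- The discriminant `Δ_n = ∏_{i<j} (z_i − z_j)^2`. -/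
def discr : Rn k n :=
  ∏ i : Fin n, ∏ j ∈ Finset.Ioi i, (Z k n (Pi.single i 1) - Z k n (Pi.single j 1)) ^ 2

/-! ### Auxiliary definitions -/

open MvPolynomial

/-- The antisymmetrized monomial `a_χ = Σ_σ sgn(σ) z^{χ∘σ}`. -/
def aa (χ : Fin n → ℤ) : Rn k n :=
  ∑ σ : Equiv.Perm (Fin n), (Equiv.Perm.sign σ : ℤ) • Z k n (χ ∘ σ)

/-- The staircase exponent `(0, 1, …, n-1)`. -/
def iotaF : Fin n → ℤ := fun i => (i : ℤ)

/-- The shifted staircase `(1, 2, …, n)`. -/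
def deltaF : Fin n → ℤ := fun i => (i : ℤ) + 1

/-- The generators appearing in the statement. -/
def Gfun (χ : Fin n → ℤ) : Rn k n :=
  ∑ σ : Equiv.Perm (Fin n),
    (Equiv.Perm.sign σ : ℤ) • msym k n (fun i => χ i + ((σ i : ℕ) : ℤ) + 1)

/-! ### Basic lemmas about `Z` and `permAlg` -/

theorem Z_mul (a b : Fin n → ℤ) : Z k n a * Z k n b = Z k n (a + b) := by
  simp [Z, AddMonoidAlgebra.single_mul_single]

theorem Z_pow (a : Fin n → ℤ) (m : ℕ) : Z k n a ^ m = Z k n (m • a) := by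
  simp [Z, AddMonoidAlgebra.single_pow]

theorem Z_sum {ι : Type} (s : Finset ι) (f : ι → Fin n → ℤ) :
    ∏ i ∈ s, Z k n (f i) = Z k n (∑ i ∈ s, f i) := by
  classical
  induction s using Finset.cons_induction with
  | empty => simp [Z, AddMonoidAlgebra.one_def]
  | cons i s hi ih => rw [Finset.prod_cons, ih, Z_mul, Finset.sum_cons]

theorem permAlg_Z (σ : Equiv.Perm (Fin n)) (γ : Fin n → ℤ) :
    permAlg k n σ (Z k n γ) = Z k n (γ ∘ σ) := by
  rw [Z, permAlg, AddMonoidAlgebra.domCongr_single]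
  rfl

theorem sign_smul_smul (σ : Equiv.Perm (Fin n)) (x : Rn k n) :
    (Equiv.Perm.sign σ : ℤ) • (Equiv.Perm.sign σ : ℤ) • x = x := by
  rw [smul_smul]
  rcases Int.units_eq_one_or (Equiv.Perm.sign σ) with h | h <;> simp [h]

theorem aa_perm (σ : Equiv.Perm (Fin n)) (χ : Fin n → ℤ) :
    permAlg k n σ (aa k n χ) = (Equiv.Perm.sign σ : ℤ) • aa k n χ := by
  have step1 : permAlg k n σ (aa k n χ) =
      ∑ τ : Equiv.Perm (Fin n), (Equiv.Perm.sign τ : ℤ) • Z k n (χ ∘ ⇑(τ * σ)) := by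
    rw [aa, map_sum]
    apply Finset.sum_congr rfl
    intro τ _
    rw [map_zsmul, permAlg_Z]
    rfl
  rw [step1, aa, Finset.smul_sum]
  apply Fintype.sum_equiv (Equiv.mulRight σ)
  intro τ
  simp only [Equiv.coe_mulRight, smul_smul, Equiv.Perm.sign_mul]
  congr 1
  rcases Int.units_eq_one_or (Equiv.Perm.sign σ) with h | h <;>
    rcases Int.units_eq_one_or (Equiv.Perm.sign τ) with h' | h' <;> simp [h, h']

theorem Z_const_mul_aa (c : ℤ) (χ : Fin n → ℤ) :
    Z k n (fun _ => c) * aa k n χ = aa k n (fun i => χ i + c) := by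
  rw [aa, aa, Finset.mul_sum]
  apply Finset.sum_congr rfl
  intro σ _
  rw [mul_smul_comm, Z_mul]
  have : (fun _ => c) + χ ∘ ⇑σ = (fun i => χ i + c) ∘ ⇑σ := by
    funext i; simp [add_comm]
  rw [this]

/-! ### The Vandermonde identity -/

theorem prod_v_pow (σ : Equiv.Perm (Fin n)) :
    ∏ i : Fin n, Z k n (Pi.single (σ i) 1) ^ (i : ℕ) = Z k n (iotaF n ∘ ⇑σ.symm) := by
  have h1 : ∀ i : Fin n, Z k n (Pi.single (σ i) 1) ^ (i : ℕ) =
      Z k n (Pi.single (σ i) ((i : ℕ) : ℤ)) := by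
    intro i
    rw [Z_pow]
    congr 1
    funext j
    by_cases h : j = σ i <;> simp [h, Pi.single_apply]
  rw [Finset.prod_congr rfl (fun i _ => h1 i), Z_sum]
  congr 1
  have := Equiv.sum_comp σ.symm (fun i => (Pi.single (σ i) ((i : ℕ) : ℤ) : Fin n → ℤ))
  rw [← this]
  have h2 : ∀ l : Fin n, (Pi.single (σ (σ.symm l)) (((σ.symm l : Fin n) : ℕ) : ℤ) : Fin n → ℤ) =
      Pi.single l ((iotaF n ∘ ⇑σ.symm) l) := by
    intro l; rw [Equiv.apply_symm_apply]; rfl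
  rw [Finset.sum_congr rfl (fun l _ => h2 l), Finset.univ_sum_single]

theorem vand : ∏ i : Fin n, ∏ j ∈ Finset.Ioi i,
    (Z k n (Pi.single j 1) - Z k n (Pi.single i 1)) = aa k n (iotaF n) := by
  rw [← Matrix.det_vandermonde (fun i : Fin n => Z k n (Pi.single i 1)), Matrix.det_apply]
  have h1 : ∀ σ : Equiv.Perm (Fin n),
      Equiv.Perm.sign σ • ∏ i : Fin n,
        Matrix.vandermonde (fun i : Fin n => Z k n (Pi.single i 1)) (σ i) i =
      (Equiv.Perm.sign σ : ℤ) • Z k n (iotaF n ∘ ⇑σ.symm) := by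
    intro σ
    rw [Units.smul_def]
    congr 1
    rw [← prod_v_pow]
    rfl
  rw [Finset.sum_congr rfl (fun σ _ => h1 σ)]
  rw [aa]
  apply Fintype.sum_equiv (Equiv.inv (Equiv.Perm (Fin n)))
  intro σ
  simp only [Equiv.inv_apply, Equiv.Perm.sign_inv]
  rfl

theorem discr_eq : discr k n = aa k n (iotaF n) * aa k n (iotaF n) := by
  rw [discr, ← vand, ← sq, ← Finset.prod_pow]
  apply Finset.prod_congr rfl
  intro i _
  rw [← Finset.prod_pow]
  apply Finset.prod_congr rfl
  intro j _
  ring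

/-! ### The key product identity for the generators -/

theorem G_eq (χ : Fin n → ℤ) :
    Gfun k n χ = (n.factorial : k)⁻¹ • (aa k n χ * aa k n (deltaF n)) := by
  have expand : ∀ σ : Equiv.Perm (Fin n),
      (Equiv.Perm.sign σ : ℤ) • msym k n (fun i => χ i + ((σ i : ℕ) : ℤ) + 1) =
      (n.factorial : k)⁻¹ • ∑ τ : Equiv.Perm (Fin n),
        (Equiv.Perm.sign σ : ℤ) • Z k n ((χ ∘ ⇑τ) + (deltaF n ∘ ⇑(σ * τ))) := by
    intro σ
    rw [msym, smul_comm, Finset.smul_sum]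
    congr 1
    apply Finset.sum_congr rfl
    intro τ _
    have harg : ((fun i => χ i + ((σ i : ℕ) : ℤ) + 1) ∘ ⇑τ) =
        (χ ∘ ⇑τ + deltaF n ∘ ⇑(σ * τ)) := by
      funext i
      simp [deltaF, Equiv.Perm.mul_apply, add_assoc]
    rw [harg]
  rw [Gfun, Finset.sum_congr rfl (fun σ _ => expand σ), ← Finset.smul_sum]
  congr 1
  rw [Finset.sum_comm]
  have inner : ∀ τ : Equiv.Perm (Fin n),
      ∑ σ : Equiv.Perm (Fin n),
        (Equiv.Perm.sign σ : ℤ) • Z k n ((χ ∘ ⇑τ) + (deltaF n ∘ ⇑(σ * τ))) =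
      ∑ ρ : Equiv.Perm (Fin n),
        ((Equiv.Perm.sign τ : ℤ) * (Equiv.Perm.sign ρ : ℤ)) •
          Z k n ((χ ∘ ⇑τ) + (deltaF n ∘ ⇑ρ)) := by
    intro τ
    apply Fintype.sum_equiv (Equiv.mulRight τ)
    intro σ
    simp only [Equiv.coe_mulRight]
    congr 1
    rw [Equiv.Perm.sign_mul]
    push_cast
    rcases Int.units_eq_one_or (Equiv.Perm.sign σ) with h | h <;>
      rcases Int.units_eq_one_or (Equiv.Perm.sign τ) with h' | h' <;> simp [h, h']
  rw [Finset.sum_congr rfl (fun τ _ => inner τ), aa, aa, Finset.sum_mul_sum]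
  apply Finset.sum_congr rfl; intro τ _
  apply Finset.sum_congr rfl; intro ρ _
  rw [smul_mul_smul_comm, Z_mul]

/-! ### Decomposition of antisymmetric elements -/

theorem antisym_decomp (g : Rn k n)
    (hg : ∀ σ : Equiv.Perm (Fin n), permAlg k n σ g = (Equiv.Perm.sign σ : ℤ) • g) :
    (n.factorial : k) • g = ∑ γ ∈ g.coeff.support, g.coeff γ • aa k n γ := by
  have key : ∀ σ : Equiv.Perm (Fin n),
      (Equiv.Perm.sign σ : ℤ) • permAlg k n σ g = g := by
    intro σ
    rw [hg σ, smul_smul]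
    rcases Int.units_eq_one_or (Equiv.Perm.sign σ) with h | h <;> simp [h]
  have card : ∑ σ : Equiv.Perm (Fin n), (Equiv.Perm.sign σ : ℤ) • permAlg k n σ g
      = (n.factorial : k) • g := by
    rw [Finset.sum_congr rfl (fun σ _ => key σ), Finset.sum_const, Finset.card_univ,
      Fintype.card_perm, Fintype.card_fin, Nat.cast_smul_eq_nsmul]
  rw [← card]
  have expand : ∀ σ : Equiv.Perm (Fin n),
      (Equiv.Perm.sign σ : ℤ) • permAlg k n σ g =
      ∑ γ ∈ g.coeff.support, g.coeff γ • ((Equiv.Perm.sign σ : ℤ) • Z k n (γ ∘ ⇑σ)) := by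
    intro σ
    conv_lhs => rw [← AddMonoidAlgebra.sum_coeff_single g]
    rw [Finsupp.sum, map_sum, Finset.smul_sum]
    apply Finset.sum_congr rfl
    intro γ _
    have h1 : (AddMonoidAlgebra.single γ (g.coeff γ) : Rn k n) = g.coeff γ • Z k n γ := by
      rw [Z, AddMonoidAlgebra.smul_single, smul_eq_mul, mul_one]
    rw [h1, map_smul, permAlg_Z, smul_comm]
  rw [Finset.sum_congr rfl (fun σ _ => expand σ), Finset.sum_comm]
  apply Finset.sum_congr rfl
  intro γ _
  rw [aa, Finset.smul_sum]

theorem aa_iota_ne : aa k n (iotaF n) ≠ 0 := by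
  intro h
  have happ : (aa k n (iotaF n)).coeff (iotaF n) = (0 : k) := by rw [h]; rfl
  rw [aa] at happ
  have key : ∀ σ : Equiv.Perm (Fin n),
      ((Equiv.Perm.sign σ : ℤ) • Z k n (iotaF n ∘ σ)).coeff (iotaF n) =
        if σ = 1 then (1 : k) else 0 := by
    intro σ
    rw [← Int.cast_smul_eq_zsmul k, Z, AddMonoidAlgebra.coeff_smul_apply, AddMonoidAlgebra.coeff_single, Finsupp.single_apply]
    by_cases h1 : σ = 1
    · subst h1
      rw [if_pos rfl, if_pos]
      · simp
      · rfl
    · have hne : iotaF n ∘ ⇑σ ≠ iotaF n := by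
        intro heq
        apply h1
        ext i
        have := congrFun heq i
        simpa [iotaF, Fin.val_eq_val] using this
      rw [if_neg hne, smul_zero, if_neg h1]
  rw [AddMonoidAlgebra.coeff_sum, Finsupp.finset_sum_apply] at happ
  rw [Finset.sum_congr rfl (fun σ _ => key σ)] at happ
  simp at happ

/-! ### Divisibility theory in the polynomial ring -/

theorem prod_primes_dvd' {α : Type*} [CommMonoidWithZero α] [IsCancelMulZero α] {ι : Type*}
    (s : Finset ι) (p : ι → α) (a : α) (hp : ∀ i ∈ s, Prime (p i))
    (hd : ∀ i ∈ s, p i ∣ a)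
    (hnd : ∀ i ∈ s, ∀ j ∈ s, i ≠ j → ¬ p i ∣ p j) :
    (∏ i ∈ s, p i) ∣ a := by
  classical
  induction s using Finset.cons_induction with
  | empty => simpa using one_dvd a
  | cons i s his ih =>
    obtain ⟨b, rfl⟩ := ih (fun j hj => hp j (Finset.mem_cons_of_mem hj))
      (fun j hj => hd j (Finset.mem_cons_of_mem hj))
      (fun j hj l hl hjl => hnd j (Finset.mem_cons_of_mem hj) l (Finset.mem_cons_of_mem hl) hjl)
    have hpi : Prime (p i) := hp i (Finset.mem_cons_self i s)
    have hdi : p i ∣ (∏ j ∈ s, p j) * b := hd i (Finset.mem_cons_self i s)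
    have hnotprod : ¬ p i ∣ ∏ j ∈ s, p j := by
      intro hdvd
      obtain ⟨j, hj, hdj⟩ := (hpi.dvd_finset_prod_iff _).1 hdvd
      exact hnd i (Finset.mem_cons_self i s) j (Finset.mem_cons_of_mem hj)
        (fun h => his (h ▸ hj)) hdj
    obtain ⟨c, rfl⟩ := (hpi.dvd_mul.1 hdi).resolve_left hnotprod
    exact ⟨c, by rw [Finset.prod_cons, ← mul_assoc, mul_comm (p i)]⟩

theorem prime_X_sub (i j : Fin n) (hij : i ≠ j) :
    Prime (X j - X i : MvPolynomial (Fin n) k) := by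
  let E := (renameEquiv k (Equiv.optionSubtypeNe j).symm).trans
    (optionEquivLeft k {b : Fin n // b ≠ j})
  have hE : E (X j - X i) = Polynomial.X - Polynomial.C (X ⟨i, hij⟩) := by
    simp only [E, AlgEquiv.trans_apply, map_sub, renameEquiv_apply, rename_X]
    rw [Equiv.optionSubtypeNe_symm_self, Equiv.optionSubtypeNe_symm_of_ne hij,
      optionEquivLeft_X_none, optionEquivLeft_X_some]
  have : Prime (E (X j - X i)) := by
    rw [hE]; exact Polynomial.prime_X_sub_C _
  exact (MulEquiv.prime_iff E).1 this

theorem notdvd (i j a b : Fin n) (hij : i < j) (hab : a < b)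
    (hne : ¬ (a = i ∧ b = j)) :
    ¬ ((X b - X a : MvPolynomial (Fin n) k) ∣ X j - X i) := by
  rintro ⟨q, hq⟩
  obtain ⟨t, ht1, hta, htb⟩ : ∃ t : Fin n, (t = i ∨ t = j) ∧ t ≠ a ∧ t ≠ b := by
    by_cases h2 : i = a
    · subst h2
      have hbj : b ≠ j := fun h => hne ⟨rfl, h⟩
      exact ⟨j, Or.inr rfl, fun h => absurd (h ▸ hij) (lt_irrefl _),
        fun h => hbj h.symm⟩
    · by_cases h3 : i = b
      · subst h3
        exact ⟨j, Or.inr rfl, fun h => lt_asymm hab (h ▸ hij),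
          fun h => absurd (h ▸ hij) (lt_irrefl _)⟩
      · exact ⟨i, Or.inl rfl, h2, h3⟩
  set v : Fin n → k := fun l => if l = t then 1 else 0 with hv
  have hzero : eval v (X b - X a : MvPolynomial (Fin n) k) = 0 := by
    simp only [map_sub, eval_X, hv]
    rw [if_neg (fun h => htb h.symm), if_neg (fun h => hta h.symm)]
    ring
  have hnz : eval v (X j - X i : MvPolynomial (Fin n) k) ≠ 0 := by
    simp only [map_sub, eval_X, hv]
    have hji : j ≠ i := ne_of_gt hij
    rcases ht1 with h | h <;> subst h
    · rw [if_neg hji, if_pos rfl]; norm_num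
    · rw [if_pos rfl, if_neg (Ne.symm hji)]; norm_num
  exact hnz (by rw [hq, map_mul, hzero, zero_mul])

/-- Exponent vectors as finitely supported functions. -/
def FF (ψ : Fin n → ℕ) : Fin n →₀ ℕ := Finsupp.equivFunOnFinite.symm ψ

/-- The polynomial avatar of the antisymmetrizations. -/
def bb (ψ : Fin n → ℕ) : MvPolynomial (Fin n) k :=
  ∑ σ : Equiv.Perm (Fin n),
    (Equiv.Perm.sign σ : ℤ) • monomial (FF n (ψ ∘ σ)) (1 : k)

theorem term_dvd_le (i j : Fin n) (hij : i ≠ j) (γ : Fin n → ℕ) (hle : γ i ≤ γ j) :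
    (X j - X i : MvPolynomial (Fin n) k) ∣
      monomial (FF n γ) (1 : k) - monomial (FF n (γ ∘ Equiv.swap i j)) 1 := by
  set d : ℕ := γ j - γ i with hd
  set μ : Fin n → ℕ := Function.update γ j (γ i) with hμ
  have key1 : FF n γ = FF n μ + Finsupp.single j d := by
    ext l
    simp only [FF, Finsupp.add_apply, Finsupp.coe_equivFunOnFinite_symm,
      Finsupp.single_apply]
    by_cases h : l = j
    · subst h; simp [hμ, hd, Function.update_self]; omega
    · simp [hμ, Function.update_of_ne h, Ne.symm h]
  have key2 : FF n (γ ∘ Equiv.swap i j) = FF n μ + Finsupp.single i d := by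
    ext l
    simp only [FF, Finsupp.add_apply, Finsupp.coe_equivFunOnFinite_symm,
      Finsupp.single_apply, Function.comp_apply]
    by_cases h : l = i
    · subst h
      simp [Equiv.swap_apply_left, hμ, Function.update_of_ne hij, hd]
      omega
    · by_cases h' : l = j
      · subst h'
        simp [Equiv.swap_apply_right, hμ, Function.update_self, Ne.symm h]
      · simp [Equiv.swap_apply_of_ne_of_ne h h', hμ, Function.update_of_ne h', Ne.symm h]
  have hm1 : (monomial (FF n γ) (1 : k)) = monomial (FF n μ) 1 * X j ^ d := by
    rw [X_pow_eq_monomial, monomial_mul, key1, mul_one]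
  have hm2 : (monomial (FF n (γ ∘ Equiv.swap i j)) (1 : k)) =
      monomial (FF n μ) 1 * X i ^ d := by
    rw [X_pow_eq_monomial, monomial_mul, key2, mul_one]
  rw [hm1, hm2, ← mul_sub]
  exact Dvd.dvd.mul_left (sub_dvd_pow_sub_pow _ _ d) _

theorem term_dvd (i j : Fin n) (hij : i ≠ j) (γ : Fin n → ℕ) :
    (X j - X i : MvPolynomial (Fin n) k) ∣
      monomial (FF n γ) (1 : k) - monomial (FF n (γ ∘ Equiv.swap i j)) 1 := by
  rcases le_total (γ i) (γ j) with h | h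
  · exact term_dvd_le k n i j hij γ h
  · have h' : (γ ∘ Equiv.swap i j) i ≤ (γ ∘ Equiv.swap i j) j := by
      simp [Equiv.swap_apply_left, Equiv.swap_apply_right, h]
    have := term_dvd_le k n i j hij (γ ∘ Equiv.swap i j) h'
    have hcomp : (γ ∘ Equiv.swap i j) ∘ Equiv.swap i j = γ := by
      funext l; simp [Function.comp_apply, Equiv.swap_apply_self]
    rw [hcomp] at this
    rw [← dvd_neg] at this
    simpa using this

theorem pair_dvd_bb (i j : Fin n) (hij : i ≠ j) (ψ : Fin n → ℕ) :
    (X j - X i : MvPolynomial (Fin n) k) ∣ bb k n ψ := by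
  set s : Equiv.Perm (Fin n) := Equiv.swap i j with hs
  have hdouble : bb k n ψ + bb k n ψ =
      ∑ σ : Equiv.Perm (Fin n), (Equiv.Perm.sign σ : ℤ) •
        (monomial (FF n (ψ ∘ σ)) (1 : k) - monomial (FF n ((ψ ∘ σ) ∘ Equiv.swap i j)) 1) := by
    have hre : bb k n ψ = ∑ σ : Equiv.Perm (Fin n),
        (-(Equiv.Perm.sign σ : ℤ)) • monomial (FF n ((ψ ∘ σ) ∘ Equiv.swap i j)) (1 : k) := by
      rw [bb]
      apply Fintype.sum_equiv (Equiv.mulRight s)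
      intro σ
      simp only [Equiv.coe_mulRight]
      have harg2 : (ψ ∘ ⇑(σ * s)) ∘ ⇑(Equiv.swap i j) = ψ ∘ ⇑σ := by
        funext l; rw [hs]; simp [Equiv.Perm.mul_apply, Equiv.swap_apply_self]
      rw [harg2]
      congr 1
      rw [Equiv.Perm.sign_mul, hs, Equiv.Perm.sign_swap hij]
      push_cast
      ring
    nth_rewrite 2 [hre]
    rw [bb]
    rw [← Finset.sum_add_distrib]
    apply Finset.sum_congr rfl
    intro σ _
    rw [smul_sub, neg_smul]
    ring
  have hdvd2 : (X j - X i : MvPolynomial (Fin n) k) ∣ bb k n ψ + bb k n ψ := by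
    rw [hdouble]
    apply Finset.dvd_sum
    intro σ _
    rw [zsmul_eq_mul]
    exact Dvd.dvd.mul_left (term_dvd k n i j hij (ψ ∘ σ)) _
  have : bb k n ψ = C ((2 : k)⁻¹) * (bb k n ψ + bb k n ψ) := by
    rw [← two_smul k (bb k n ψ), ← smul_eq_C_mul, smul_smul]
    norm_num
  rw [this]
  exact Dvd.dvd.mul_left hdvd2 _

/-- The Vandermonde product in the polynomial ring. -/
def VP : MvPolynomial (Fin n) k :=
  ∏ i : Fin n, ∏ j ∈ Finset.Ioi i, (X j - X i)

theorem V_dvd_bb (ψ : Fin n → ℕ) : VP k n ∣ bb k n ψ := by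
  classical
  rw [VP, ← Finset.prod_sigma (Finset.univ : Finset (Fin n)) (fun i => Finset.Ioi i)
    (fun x => (X x.2 - X x.1 : MvPolynomial (Fin n) k))]
  apply prod_primes_dvd'
  · intro x hx
    rw [Finset.mem_sigma] at hx
    exact prime_X_sub k n x.1 x.2 (ne_of_lt (Finset.mem_Ioi.1 hx.2))
  · intro x hx
    rw [Finset.mem_sigma] at hx
    exact pair_dvd_bb k n x.1 x.2 (ne_of_lt (Finset.mem_Ioi.1 hx.2)) ψ
  · intro x hx y hy hxy
    rw [Finset.mem_sigma] at hx hy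
    apply notdvd k n y.1 y.2 x.1 x.2 (Finset.mem_Ioi.1 hy.2) (Finset.mem_Ioi.1 hx.2)
    rintro ⟨h1, h2⟩
    exact hxy (Sigma.ext h1 (heq_of_eq h2))

/-! ### Transfer to the Laurent ring -/

/-- The canonical map from polynomials to Laurent polynomials. -/
def phi : MvPolynomial (Fin n) k →ₐ[k] Rn k n :=
  aeval (fun i : Fin n => Z k n (Pi.single i 1))

theorem phi_monomial (d : Fin n →₀ ℕ) :
    phi k n (monomial d (1 : k)) = Z k n (fun l => (d l : ℤ)) := by
  rw [phi, aeval_monomial, map_one, one_mul]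
  rw [Finsupp.prod_fintype _ _ (fun i => pow_zero _)]
  have h1 : ∀ i : Fin n, Z k n (Pi.single i 1) ^ d i = Z k n (Pi.single i ((d i : ℕ) : ℤ)) := by
    intro i
    rw [Z_pow]
    congr 1
    funext j
    by_cases h : j = i <;> simp [h, Pi.single_apply]
  rw [Finset.prod_congr rfl (fun i _ => h1 i), Z_sum]
  congr 1
  have h2 : ∀ i : Fin n, (Pi.single i ((d i : ℕ) : ℤ) : Fin n → ℤ) =
      Pi.single i ((fun l => (d l : ℤ)) i) := fun i => rfl
  rw [Finset.sum_congr rfl (fun i _ => h2 i), Finset.univ_sum_single]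

theorem phi_bb (ψ : Fin n → ℕ) :
    phi k n (bb k n ψ) = aa k n (fun i => (ψ i : ℤ)) := by
  rw [bb, map_sum, aa]
  apply Finset.sum_congr rfl
  intro σ _
  rw [map_zsmul, phi_monomial]
  congr 1

theorem phi_VP : phi k n (VP k n) = ∏ i : Fin n, ∏ j ∈ Finset.Ioi i,
    (Z k n (Pi.single j 1) - Z k n (Pi.single i 1)) := by
  rw [VP, map_prod]
  apply Finset.prod_congr rfl
  intro i _
  rw [map_prod]
  apply Finset.prod_congr rfl
  intro j _
  rw [map_sub, phi, aeval_X, aeval_X]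

theorem mem_SymLaurent (f : Rn k n) :
    f ∈ SymLaurent k n ↔ ∀ σ : Equiv.Perm (Fin n), permAlg k n σ f = f := Iff.rfl

/-! ### The divisibility theorem in the Laurent ring -/

theorem exists_sym (χ : Fin n → ℤ) :
    ∃ h ∈ SymLaurent k n, aa k n χ = aa k n (iotaF n) * h := by
  classical
  set m : ℤ := ∑ i : Fin n, max 0 (-χ i) with hm
  have hm0 : ∀ i : Fin n, 0 ≤ χ i + m := by
    intro i
    have h1 : max 0 (-χ i) ≤ m := by
      rw [hm]
      exact Finset.single_le_sum (fun j _ => le_max_left 0 (-χ j)) (Finset.mem_univ i)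
    have h2 : -χ i ≤ m := le_trans (le_max_right 0 (-χ i)) h1
    omega
  set ψ : Fin n → ℕ := fun i => (χ i + m).toNat with hψ
  have coeψ : ∀ i, ((ψ i : ℤ)) = χ i + m := fun i => Int.toNat_of_nonneg (hm0 i)
  obtain ⟨q, hq⟩ := V_dvd_bb k n ψ
  have h1 : aa k n (fun i => (ψ i : ℤ)) = aa k n (iotaF n) * phi k n q := by
    rw [← phi_bb, hq, map_mul, phi_VP, vand]
  have h2 : (fun i => (ψ i : ℤ)) = fun i => χ i + m := funext coeψ
  have h3 : Z k n (fun _ => m) * aa k n χ = aa k n (iotaF n) * phi k n q := by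
    rw [Z_const_mul_aa, ← h2, h1]
  have hz : Z k n (fun _ => -m) * Z k n (fun _ => m) = 1 := by
    rw [Z_mul]
    have : ((fun _ => -m) + (fun _ => m) : Fin n → ℤ) = 0 := by funext i; simp
    rw [this, Z, AddMonoidAlgebra.one_def]
  set h : Rn k n := Z k n (fun _ => -m) * phi k n q with hh
  have key : aa k n χ = aa k n (iotaF n) * h := by
    calc aa k n χ = (Z k n (fun _ => -m) * Z k n (fun _ => m)) * aa k n χ := by
          rw [hz, one_mul]
      _ = Z k n (fun _ => -m) * (Z k n (fun _ => m) * aa k n χ) := by ring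
      _ = Z k n (fun _ => -m) * (aa k n (iotaF n) * phi k n q) := by rw [h3]
      _ = aa k n (iotaF n) * h := by rw [hh]; ring
  refine ⟨h, ?_, key⟩
  rw [mem_SymLaurent]
  intro σ
  have e1 : (Equiv.Perm.sign σ : ℤ) • aa k n χ =
      (Equiv.Perm.sign σ : ℤ) • (aa k n (iotaF n) * permAlg k n σ h) := by
    rw [← aa_perm, key, map_mul, aa_perm, smul_mul_assoc]
  have e2 : aa k n χ = aa k n (iotaF n) * permAlg k n σ h := by
    calc aa k n χ = (Equiv.Perm.sign σ : ℤ) • (Equiv.Perm.sign σ : ℤ) • aa k n χ :=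
          (sign_smul_smul k n σ _).symm
      _ = (Equiv.Perm.sign σ : ℤ) • (Equiv.Perm.sign σ : ℤ) •
            (aa k n (iotaF n) * permAlg k n σ h) := by rw [e1]
      _ = aa k n (iotaF n) * permAlg k n σ h := sign_smul_smul k n σ _
  have e3 : aa k n (iotaF n) * permAlg k n σ h = aa k n (iotaF n) * h := by
    rw [← e2, key]
  exact mul_left_cancel₀ (aa_iota_ne k n) e3

theorem aai_mul_aa (γ : Fin n → ℤ) :
    aa k n (iotaF n) * aa k n γ = (n.factorial : k) • Gfun k n (fun i => γ i - 1) := by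
  have hfact : (n.factorial : k) ≠ 0 := Nat.cast_ne_zero.2 (Nat.factorial_ne_zero n)
  have hδ : aa k n (deltaF n) = Z k n (fun _ => 1) * aa k n (iotaF n) := by
    rw [Z_const_mul_aa]
    rfl
  have hshift : Z k n (fun _ => 1) * aa k n (fun i => γ i - 1) = aa k n γ := by
    rw [Z_const_mul_aa]
    congr 1
    funext i
    ring
  rw [G_eq, smul_smul, mul_inv_cancel₀ hfact, one_smul, hδ]
  calc aa k n (iotaF n) * aa k n γ
      = aa k n (iotaF n) * (Z k n (fun _ => 1) * aa k n (fun i => γ i - 1)) := by rw [hshift]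
    _ = aa k n (fun i => γ i - 1) * (Z k n (fun _ => 1) * aa k n (iotaF n)) := by ring

theorem stmt9 (hn : 0 < n) :
    {x : Rn k n | ∃ f ∈ SymLaurent k n, x = discr k n * f} =
      ↑(Submodule.span k (Set.range fun χ : Fin n → ℤ =>
          ∑ σ : Equiv.Perm (Fin n),
            (Equiv.Perm.sign σ : ℤ) • msym k n (fun i => χ i + ((σ i : ℕ) : ℤ) + 1))) := by
  classical
  have hfact : (n.factorial : k) ≠ 0 := Nat.cast_ne_zero.2 (Nat.factorial_ne_zero n)
  have hGfun : (fun χ : Fin n → ℤ =>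
      ∑ σ : Equiv.Perm (Fin n),
        (Equiv.Perm.sign σ : ℤ) • msym k n (fun i => χ i + ((σ i : ℕ) : ℤ) + 1)) =
      Gfun k n := rfl
  rw [hGfun]
  ext x
  simp only [Set.mem_setOf_eq, SetLike.mem_coe]
  constructor
  · rintro ⟨f, hf, rfl⟩
    rw [mem_SymLaurent] at hf
    set g : Rn k n := aa k n (iotaF n) * f with hg
    have hanti : ∀ σ : Equiv.Perm (Fin n),
        permAlg k n σ g = (Equiv.Perm.sign σ : ℤ) • g := by
      intro σ
      rw [hg, map_mul, aa_perm, hf σ, smul_mul_assoc]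
    have hdecomp := antisym_decomp k n g hanti
    have hx : discr k n * f = aa k n (iotaF n) * g := by rw [hg, discr_eq]; ring
    rw [hx]
    have hx2 : aa k n (iotaF n) * g =
        (n.factorial : k)⁻¹ • (aa k n (iotaF n) * ((n.factorial : k) • g)) := by
      rw [mul_smul_comm, smul_smul, inv_mul_cancel₀ hfact, one_smul]
    rw [hx2, hdecomp, Finset.mul_sum]
    apply Submodule.smul_mem
    apply Submodule.sum_mem
    intro γ _
    rw [mul_smul_comm, aai_mul_aa]
    apply Submodule.smul_mem
    apply Submodule.smul_mem
    exact Submodule.subset_span ⟨fun i => γ i - 1, rfl⟩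
  · intro hx
    have hsub : Submodule.span k (Set.range (Gfun k n)) ≤
        Submodule.map (LinearMap.mulLeft k (discr k n))
          (Subalgebra.toSubmodule (SymLaurent k n)) := by
      rw [Submodule.span_le]
      rintro y ⟨χ, rfl⟩
      obtain ⟨h, hsym, hkey⟩ := exists_sym k n χ
      have hZ1 : Z k n (fun _ => 1) ∈ SymLaurent k n := by
        rw [mem_SymLaurent]
        intro σ
        rw [permAlg_Z]
        rfl
      refine ⟨(n.factorial : k)⁻¹ • (Z k n (fun _ => 1) * h), ?_, ?_⟩
      · exact Subalgebra.smul_mem _ (mul_mem hZ1 hsym) _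
      · rw [LinearMap.mulLeft_apply]
        have hδ : aa k n (deltaF n) = Z k n (fun _ => 1) * aa k n (iotaF n) := by
          rw [Z_const_mul_aa]
          rfl
        rw [G_eq, hkey, hδ, discr_eq, mul_smul_comm]
        congr 1
        ring
    obtain ⟨f, hf, hfx⟩ := hsub hx
    have hf' : f ∈ SymLaurent k n := hf
    refine ⟨f, hf', ?_⟩
    rw [← hfx, LinearMap.mulLeft_apply]

end
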